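/- Let Z_1, ..., Z_n be independent random variables on a probability space and let T be a square-integrable real random variable measurable with respect to σ(Z_1, ..., Z_n). Then the Hájek projection T̂ of T satisfies Var(T̂) ≤ Var(T). -/

import Mathlib

open MeasureTheory ProbabilityTheory Filter

/-- The Hájek projection of a square-integrable random variable `T` with respect to the
random variables `Z 1, ..., Z n`:
`T̂ = E[T] + ∑ i, (E[T | Z i] − E[T])`. -/
noncomputable def hajekProjection {Ω 𝒵 : Type*} [MeasurableSpace Ω]
    [m𝒵 : MeasurableSpace 𝒵] (μ : Measure Ω) {n : ℕ} (Z : Fin n → Ω → 𝒵)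
    (T : Ω → ℝ) : Ω → ℝ :=
  fun ω => (∫ x, T x ∂μ) + ∑ i, ((μ[T | m𝒵.comap (Z i)]) ω - ∫ x, T x ∂μ)

/-! With `fᵢ = E[T | Zᵢ] − E[T]` we have `T̂ = E[T] + ∑ fᵢ`. The `fᵢ` are functions of the
independent `Zᵢ`, so `Var T̂ = ∑ Var E[T | Zᵢ]`, while the tower property gives
`Cov(T, E[T | Zᵢ]) = Var E[T | Zᵢ]`; hence `Cov(T, T̂) = Var T̂` and
`0 ≤ Var(T − T̂) = Var T − Var T̂`. -/

namespace ProbabilityTheory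

variable {Ω : Type*} {m mΩ : MeasurableSpace Ω} {μ : Measure Ω}

theorem variance_le_of_covariance_eq_variance [IsFiniteMeasure μ] {X Y : Ω → ℝ}
    (hX : MemLp X 2 μ) (hY : MemLp Y 2 μ) (h : cov[X, Y; μ] = Var[Y; μ]) :
    Var[Y; μ] ≤ Var[X; μ] := by
  have := variance_nonneg (X - Y) μ
  rw [variance_sub hX hY, h] at this
  linarith

theorem covariance_condExp_right_of_stronglyMeasurable [IsProbabilityMeasure μ]
    (hm : m ≤ mΩ) {X Y : Ω → ℝ} (hY : StronglyMeasurable[m] Y) (hY2 : MemLp Y 2 μ)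
    (hX : MemLp X 2 μ) :
    cov[Y, μ[X|m]; μ] = cov[Y, X; μ] := by
  have hpull : μ[Y * X|m] =ᵐ[μ] Y * μ[X|m] :=
    condExp_mul_of_stronglyMeasurable_left hY (hY2.integrable_mul hX)
      (hX.integrable one_le_two)
  rw [covariance_eq_sub hY2 (hX.condExp one_le_two), covariance_eq_sub hY2 hX,
    integral_condExp hm, ← integral_condExp hm (f := Y * X), integral_congr_ae hpull]

theorem covariance_condExp_right_eq_variance [IsProbabilityMeasure μ] (hm : m ≤ mΩ)
    {X : Ω → ℝ} (hX : MemLp X 2 μ) :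
    cov[X, μ[X|m]; μ] = Var[μ[X|m]; μ] := by
  rw [covariance_comm, ← covariance_condExp_right_of_stronglyMeasurable hm
    stronglyMeasurable_condExp (hX.condExp one_le_two) hX, covariance_self]
  exact integrable_condExp.aemeasurable

theorem IndepFun.indepFun_of_measurable_comap {β γ δ ε : Type*} {mβ : MeasurableSpace β}
    {mγ : MeasurableSpace γ} [MeasurableSpace δ] [MeasurableSpace ε] {X : Ω → β} {Y : Ω → γ}
    (h : IndepFun X Y μ) {f : Ω → δ} {g : Ω → ε}
    (hf : Measurable[mβ.comap X] f) (hg : Measurable[mγ.comap Y] g) :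
    IndepFun f g μ :=
  indep_of_indep_of_le_left (indep_of_indep_of_le_right h hg.comap_le) hf.comap_le

end ProbabilityTheory

section Hajek

variable {Ω 𝒵 : Type*} [MeasurableSpace Ω] [m𝒵 : MeasurableSpace 𝒵] {μ : Measure Ω}
  [IsProbabilityMeasure μ] {n : ℕ} {Z : Fin n → Ω → 𝒵} {T : Ω → ℝ}

theorem memLp_hajekProjection (hT : MemLp T 2 μ) : MemLp (hajekProjection μ Z T) 2 μ := by
  have hsum := memLp_finsetSum Finset.univ fun i _ ↦
    (hT.condExp (m := m𝒵.comap (Z i)) one_le_two).sub (memLp_const (∫ x, T x ∂μ))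
  exact (memLp_const (∫ x, T x ∂μ)).add hsum

theorem covariance_hajekProjection (hZ : ∀ i, Measurable (Z i)) (hT : MemLp T 2 μ) :
    cov[T, hajekProjection μ Z T; μ] = ∑ i, Var[μ[T|m𝒵.comap (Z i)]; μ] := by
  have hcond : ∀ i, MemLp (fun ω ↦ μ[T|m𝒵.comap (Z i)] ω - μ[T]) 2 μ := fun _ ↦
    (hT.condExp one_le_two).sub (memLp_const _)
  unfold hajekProjection
  rw [covariance_const_add_right
    (integrable_finsetSum _ fun i _ ↦ (hcond i).integrable one_le_two),
    covariance_fun_sum_right hcond hT]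
  refine Finset.sum_congr rfl fun i _ ↦ ?_
  rw [covariance_sub_const_right integrable_condExp,
    covariance_condExp_right_eq_variance (hZ i).comap_le hT]

theorem variance_hajekProjection (hindep : iIndepFun (m := fun _ => m𝒵) Z μ)
    (hT : MemLp T 2 μ) :
    Var[hajekProjection μ Z T; μ] = ∑ i, Var[μ[T|m𝒵.comap (Z i)]; μ] := by
  set f : Fin n → Ω → ℝ := fun i ω ↦ μ[T|m𝒵.comap (Z i)] ω - μ[T]
  have hf : ∀ i ∈ Finset.univ, MemLp (f i) 2 μ := fun _ _ ↦
    (hT.condExp one_le_two).sub (memLp_const _)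
  have hindep_f : Set.Pairwise ↑(Finset.univ : Finset (Fin n)) fun i j ↦ f i ⟂ᵢ[μ] f j :=
    fun i _ j _ hij ↦ (hindep.indepFun hij).indepFun_of_measurable_comap
      (stronglyMeasurable_condExp.measurable.sub_const _)
      (stronglyMeasurable_condExp.measurable.sub_const _)
  have hsum : hajekProjection μ Z T = fun ω ↦ μ[T] + (∑ i, f i) ω := by
    ext ω; simp [hajekProjection, f]
  rw [hsum, variance_const_add (memLp_finsetSum' _ hf).aestronglyMeasurable,
    IndepFun.variance_sum hf hindep_f]
  exact Finset.sum_congr rfl fun i _ ↦ variance_sub_const integrable_condExp.1 _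

end Hajek

theorem variance_hajekProjection_le_general {Ω 𝒵 : Type*} [MeasurableSpace Ω]
    [m𝒵 : MeasurableSpace 𝒵] (μ : Measure Ω) [IsProbabilityMeasure μ]
    {n : ℕ} (Z : Fin n → Ω → 𝒵)
    (hZmeas : ∀ i, Measurable (Z i))
    (hindep : iIndepFun (m := fun _ => m𝒵) Z μ)
    (T : Ω → ℝ)
    (hT2 : MemLp T 2 μ) :
    variance (hajekProjection μ Z T) μ ≤ variance T μ :=
  variance_le_of_covariance_eq_variance hT2 (memLp_hajekProjection hT2) <| by
    rw [covariance_hajekProjection hZmeas hT2, variance_hajekProjection hindep hT2]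

/-- If `Z 1, ..., Z n` are independent and `T` is a square-integrable
real random variable measurable with respect to `σ(Z 1, ..., Z n)`, then the Hájek
projection `T̂` of `T` satisfies `Var T̂ ≤ Var T`. -/
theorem variance_hajekProjection_le {Ω 𝒵 : Type*} [MeasurableSpace Ω]
    [m𝒵 : MeasurableSpace 𝒵] (μ : Measure Ω) [IsProbabilityMeasure μ]
    {n : ℕ} (Z : Fin n → Ω → 𝒵)
    (hZmeas : ∀ i, Measurable (Z i))
    (hindep : iIndepFun (m := fun _ => m𝒵) Z μ)
    (T : Ω → ℝ)
    (hTmeas : Measurable[⨆ i, m𝒵.comap (Z i)] T)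
    (hT2 : MemLp T 2 μ) :
    variance (hajekProjection μ Z T) μ ≤ variance T μ :=
  variance_hajekProjection_le_general (m𝒵 := m𝒵) μ Z hZmeas hindep T hT2
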